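/- arXiv:2201.04323 — 3 statements merged into one kernel-verified Lean document; each statement's English description precedes it below -/
import Mathlib

section
/- Let 1 ≤ k ≤ n and let A be a real symmetric n×n matrix with A ∈ Γ_k (when k = n, set σ_{n+1}(A) = 0). Then (k+1)·σ_{k+1}(A) ≤ ((n−k)/n)·σ_1(A)·σ_k(A). -/
open Matrix

/-- The `k`-th elementary symmetric function of the eigenvalues of an `n × n` real
matrix `A`, characterized by `det (t • I + A) = ∑ j ≤ n, sigmaElem n j A * t ^ (n - j)`.
Concretely it is the coefficient of `t^(n-k)` in the characteristic polynomial of `-A`.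
By convention `sigmaElem n 0 A = 1` and `sigmaElem n k A = 0` for `k > n`. -/
noncomputable def sigmaElem (n k : ℕ) (A : Matrix (Fin n) (Fin n) ℝ) : ℝ :=
  if k ≤ n then ((-A).charpoly).coeff (n - k) else 0

/-- `sigmaD n k A i j = ∂σ_k/∂a_{ij} (A)`, the `(i,j)` entry of the gradient matrix
`σ_k'(A)` of the polynomial map `A ↦ σ_k(A)`. -/
noncomputable def sigmaD (n k : ℕ) (A : Matrix (Fin n) (Fin n) ℝ) (i j : Fin n) : ℝ :=
  deriv (fun t : ℝ => sigmaElem n k (A + t • Matrix.single i j 1)) 0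

/-- The gradient matrix `σ_k'(A)` of the polynomial map `A ↦ σ_k(A)`. -/
noncomputable def sigmaGrad (n k : ℕ) (A : Matrix (Fin n) (Fin n) ℝ) :
    Matrix (Fin n) (Fin n) ℝ :=
  Matrix.of fun i j => sigmaD n k A i j

/-- The Gårding cone `Γ_k`: real symmetric `n × n` matrices with `σ_j(A) > 0` for
`j = 1, …, k`. -/
def GammaCone (n k : ℕ) : Set (Matrix (Fin n) (Fin n) ℝ) :=
  {A | A.IsSymm ∧ ∀ j, 1 ≤ j → j ≤ k → 0 < sigmaElem n j A}

/-- Partial derivative `∂u/∂x_i` of `u : ℝⁿ → ℝ`. -/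
noncomputable def pd (n : ℕ) (u : (Fin n → ℝ) → ℝ) (i : Fin n) (x : Fin n → ℝ) : ℝ :=
  fderiv ℝ u x (Pi.single i 1)

/-- The Hessian matrix `D²u(x) = (∂²u/∂x_i∂x_j (x))`. -/
noncomputable def hess (n : ℕ) (u : (Fin n → ℝ) → ℝ) (x : Fin n → ℝ) :
    Matrix (Fin n) (Fin n) ℝ :=
  Matrix.of fun i j => pd n (fun y => pd n u j y) i x


/-! Write the eigenvalues of `A` as a real multiset `s`, so that `σ_j(A) = e_j(s) = C(n, j) E_j`.
Newton's inequalities `E_{j-1} E_{j+1} ≤ E_j²` hold for every real multiset: by Rolle's theorem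
the roots of the derivative of `∏ (X - r)` form a real multiset of one element fewer with the same
`E_j`, which reduces them to the case `j + 1 = card s`; there, passing to reciprocals turns the inequality into
`E₂ ≤ E₁²`, i.e. Cauchy–Schwarz. On `Γ_k` all of `E_1, …, E_k` are positive, so the
ratios `E_{j+1} / E_j` decrease and `E_{k+1} ≤ E_1 E_k`; since
`(k + 1) C(n, k + 1) = (n - k) C(n, k)`, this is the claim. -/

open Polynomial

namespace Multiset

section CommSemiring

variable {R : Type*} [CommSemiring R]

theorem esymm_zero (s : Multiset R) : s.esymm 0 = 1 := by simp [esymm]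

theorem esymm_one (s : Multiset R) : s.esymm 1 = s.sum := by
  simp [esymm, powersetCard_one, map_map]

theorem esymm_eq_zero_of_card_lt {s : Multiset R} {k : ℕ} (h : card s < k) : s.esymm k = 0 := by
  simp [esymm, powersetCard_eq_empty _ h]

theorem esymm_cons_succ (a : R) (s : Multiset R) (k : ℕ) :
    (a ::ₘ s).esymm (k + 1) = s.esymm (k + 1) + a * s.esymm k := by
  simp only [esymm, powersetCard_cons, map_add, sum_add, map_map, Function.comp_def, prod_cons,
    sum_map_mul_left]

theorem esymm_card (s : Multiset R) : s.esymm (card s) = s.prod := by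
  induction s using Multiset.induction with
  | empty => simp [esymm]
  | cons a s ih =>
    rw [card_cons, esymm_cons_succ, esymm_eq_zero_of_card_lt (Nat.lt_succ_self _), ih, prod_cons,
      zero_add]

theorem sq_sum_eq_sum_map_sq_add_two_mul_esymm_two (s : Multiset R) :
    s.sum ^ 2 = (s.map (· ^ 2)).sum + 2 * s.esymm 2 := by
  induction s using Multiset.induction with
  | empty => simp [esymm_eq_zero_of_card_lt (s := (0 : Multiset R)) (k := 2) (by simp)]
  | cons a s ih =>
    rw [sum_cons, map_cons, sum_cons, esymm_cons_succ, esymm_one, add_sq, ih]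
    ring

end CommSemiring

theorem sq_sum_le_card_mul_sum_map_sq (s : Multiset ℝ) :
    s.sum ^ 2 ≤ card s * (s.map (· ^ 2)).sum := by
  classical
  calc s.sum ^ 2 = (∑ x : s, (x : ℝ)) ^ 2 := by rw [← Finset.sum_map_val, map_univ_coe]
    _ ≤ Fintype.card s * ∑ x : s, (x : ℝ) ^ 2 := sq_sum_le_card_mul_sum_sq
    _ = card s * (s.map (· ^ 2)).sum := by
      rw [card_coe, ← map_univ_comp_coe, Finset.sum_map_val]
      rfl

theorem prod_mul_esymm_map_inv {K : Type*} [Field K] {s : Multiset K} (h0 : (0 : K) ∉ s)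
    {i j : ℕ} (hij : i + j = card s) : s.prod * (s.map (·⁻¹)).esymm i = s.esymm j := by
  induction s using Multiset.induction generalizing i j with
  | empty => simp_all [esymm_zero]
  | cons a s ih =>
    have ih := @ih (fun h => h0 (mem_cons_of_mem h))
    rw [card_cons] at hij
    rcases i with _ | i
    · rw [zero_add] at hij
      rw [esymm_zero, mul_one, hij, ← card_cons, esymm_card]
    have ha : a * a⁻¹ = 1 := mul_inv_cancel₀ fun h => h0 (h ▸ mem_cons_self a s)
    have hi := ih (i := i) (j := card s - i) (by omega)
    rw [map_cons, esymm_cons_succ, prod_cons]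
    rcases j with _ | j
    · rw [esymm_eq_zero_of_card_lt (by simp; omega), esymm_zero]
      rw [show card s - i = 0 by omega, esymm_zero] at hi
      linear_combination (s.prod * (s.map (·⁻¹)).esymm i) * ha + hi
    · rw [esymm_cons_succ, ← ih (i := i + 1) (j := j) (by omega)]
      rw [show card s - i = j + 1 by omega] at hi
      linear_combination (s.prod * (s.map (·⁻¹)).esymm i) * ha + hi

theorem exists_card_eq_pred_card_mul_esymm_eq (s : Multiset ℝ) :
    ∃ t : Multiset ℝ, card t = card s - 1 ∧
      ∀ i < card s, (card s : ℝ) * t.esymm i = ((card s - i : ℕ) : ℝ) * s.esymm i := by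
  set m := card s
  set f := (s.map fun r => X - C r).prod
  have hf : f.natDegree = m := natDegree_multiset_prod_X_sub_C_eq_card s
  -- Rolle's theorem: the derivative of a real-rooted polynomial is real-rooted.
  have hrolle : m ≤ card (derivative f).roots + 1 := by
    simpa [f, roots_multiset_prod_X_sub_C] using card_roots_le_derivative f
  obtain ⟨hdeg, hcard⟩ : (derivative f).natDegree = m - 1 ∧
      card (derivative f).roots = (derivative f).natDegree := by
    have := card_roots' (derivative f); have := natDegree_derivative_le f; omega
  have hcoeff : ∀ i < m, (derivative f).coeff (m - 1 - i) =
      (-1) ^ i * s.esymm i * ((m - i : ℕ) : ℝ) := by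
    intro i hi
    have hcast : ((m - 1 - i : ℕ) : ℝ) + 1 = ((m - i : ℕ) : ℝ) := by
      rw [show m - i = m - 1 - i + 1 by omega]; push_cast; ring
    rw [coeff_derivative, prod_X_sub_C_coeff s (by omega : m - 1 - i + 1 ≤ m),
      show m - (m - 1 - i + 1) = i by omega, hcast]
  refine ⟨(derivative f).roots, by rw [hcard, hdeg], fun i hi => ?_⟩
  have hlead : (derivative f).leadingCoeff = m := by
    rw [leadingCoeff, hdeg]
    simpa [esymm_zero] using hcoeff 0 (by omega)
  have hvieta := coeff_eq_esymm_roots_of_card hcard (k := m - 1 - i) (by omega)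
  rw [hcoeff i hi, hdeg, show m - 1 - (m - 1 - i) = i by omega, hlead] at hvieta
  have hsign : ((-1 : ℝ) ^ i) ≠ 0 := pow_ne_zero _ (by norm_num)
  apply mul_left_cancel₀ hsign
  linear_combination -hvieta

/-- The normalized mean `E_k`; as `x / 0 = 0`, it vanishes for `k > card s`. -/
noncomputable def esymmNorm (s : Multiset ℝ) (k : ℕ) : ℝ := s.esymm k / (card s).choose k

theorem esymmNorm_zero (s : Multiset ℝ) : s.esymmNorm 0 = 1 := by
  simp [esymmNorm, esymm_zero]

theorem esymmNorm_eq_zero_of_card_lt {s : Multiset ℝ} {k : ℕ} (h : card s < k) :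
    s.esymmNorm k = 0 := by
  simp [esymmNorm, Nat.choose_eq_zero_of_lt h]

theorem choose_mul_esymmNorm (s : Multiset ℝ) (k : ℕ) :
    ((card s).choose k : ℝ) * s.esymmNorm k = s.esymm k := by
  rcases le_or_gt k (card s) with hk | hk
  · have : ((card s).choose k : ℝ) ≠ 0 := by exact_mod_cast (Nat.choose_pos hk).ne'
    rw [esymmNorm, mul_div_cancel₀ _ this]
  · rw [esymmNorm_eq_zero_of_card_lt hk, esymm_eq_zero_of_card_lt hk, mul_zero]

theorem esymmNorm_two_le_sq (s : Multiset ℝ) : s.esymmNorm 2 ≤ s.esymmNorm 1 ^ 2 := by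
  rcases lt_or_ge (card s) 2 with hs | hs
  · rw [esymmNorm_eq_zero_of_card_lt hs]; positivity
  have hm : (2 : ℝ) ≤ card s := by exact_mod_cast hs
  have hcs := sq_sum_le_card_mul_sum_map_sq s
  rw [sq_sum_eq_sum_map_sq_add_two_mul_esymm_two] at hcs
  rw [esymmNorm, esymmNorm, esymm_one, Nat.cast_choose_two, Nat.choose_one_right, div_pow,
    div_le_div_iff₀ (by nlinarith) (by positivity), sq_sum_eq_sum_map_sq_add_two_mul_esymm_two]
  nlinarith

theorem exists_card_eq_pred_esymmNorm_eq (s : Multiset ℝ) :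
    ∃ t : Multiset ℝ, card t = card s - 1 ∧
      ∀ i < card s, t.esymmNorm i = s.esymmNorm i := by
  obtain ⟨t, ht, hts⟩ := exists_card_eq_pred_card_mul_esymm_eq s
  refine ⟨t, ht, fun i hi => ?_⟩
  have hchoose :
      ((card s - 1).choose i : ℝ) * card s = (card s).choose i * ((card s - i : ℕ) : ℝ) := by
    have := Nat.choose_mul_succ_eq (card s - 1) i
    rw [Nat.sub_add_cancel (by omega)] at this
    exact_mod_cast this
  have h1 : ((card s - 1).choose i : ℝ) ≠ 0 := by exact_mod_cast (Nat.choose_pos (by omega)).ne'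
  have h2 : ((card s).choose i : ℝ) ≠ 0 := by exact_mod_cast (Nat.choose_pos (by omega)).ne'
  have h3 : ((card s - i : ℕ) : ℝ) ≠ 0 := by exact_mod_cast (by omega : card s - i ≠ 0)
  rw [esymmNorm, esymmNorm, ht, div_eq_div_iff h1 h2]
  apply mul_right_cancel₀ h3
  linear_combination ((card s - 1).choose i : ℝ) * hts i hi - t.esymm i * hchoose

theorem esymmNorm_card_sub {s : Multiset ℝ} (h0 : (0 : ℝ) ∉ s) {k : ℕ} (hk : k ≤ card s) :
    s.esymmNorm (card s - k) = s.prod * (s.map (·⁻¹)).esymmNorm k := by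
  rw [esymmNorm, esymmNorm, card_map, Nat.choose_symm hk,
    ← prod_mul_esymm_map_inv h0 (Nat.add_sub_cancel' hk), mul_div_assoc]

theorem esymmNorm_mul_esymmNorm_le_sq_of_card_eq {s : Multiset ℝ} {j : ℕ}
    (hs : card s = j + 2) :
    s.esymmNorm j * s.esymmNorm (j + 2) ≤ s.esymmNorm (j + 1) ^ 2 := by
  by_cases h0 : (0 : ℝ) ∈ s
  · have htop : s.esymmNorm (j + 2) = 0 := by
      rw [esymmNorm, ← hs, esymm_card, prod_eq_zero h0, zero_div]
    rw [htop, mul_zero]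
    positivity
  have hE : ∀ i ≤ 2, s.esymmNorm (j + 2 - i) = s.prod * (s.map (·⁻¹)).esymmNorm i := by
    intro i hi
    rw [← hs, esymmNorm_card_sub h0 (by omega)]
  rw [← Nat.sub_zero (j + 2), hE 0 (by omega), show j = j + 2 - 2 by omega, hE 2 le_rfl,
    show j + 2 - 2 + 1 = j + 2 - 1 by omega, hE 1 (by omega), esymmNorm_zero]
  nlinarith [mul_le_mul_of_nonneg_left (esymmNorm_two_le_sq (s.map (·⁻¹))) (sq_nonneg s.prod)]

/-- **Newton's inequalities**. -/
theorem esymmNorm_mul_esymmNorm_le_sq (s : Multiset ℝ) (j : ℕ) :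
    s.esymmNorm j * s.esymmNorm (j + 2) ≤ s.esymmNorm (j + 1) ^ 2 := by
  induction hm : card s using Nat.strong_induction_on generalizing s with
  | _ m ih =>
  rcases lt_trichotomy (j + 2) m with hlt | heq | hgt
  · obtain ⟨t, ht, hts⟩ := exists_card_eq_pred_esymmNorm_eq s
    rw [← hts j (by omega), ← hts (j + 1) (by omega), ← hts (j + 2) (by omega)]
    exact ih (m - 1) (by omega) t (by omega)
  · exact esymmNorm_mul_esymmNorm_le_sq_of_card_eq (hm.trans heq.symm)
  · rw [esymmNorm_eq_zero_of_card_lt (k := j + 2) (hm ▸ hgt), mul_zero]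
    positivity

end Multiset

theorem apply_succ_le_apply_one_mul_of_mul_le_sq {a : ℕ → ℝ} (h0 : a 0 = 1)
    (hnewton : ∀ j, a j * a (j + 2) ≤ a (j + 1) ^ 2) {k : ℕ}
    (hpos : ∀ j, 1 ≤ j → j ≤ k → 0 < a j) : a (k + 1) ≤ a 1 * a k := by
  induction k with
  | zero => rw [h0, mul_one]
  | succ k ih =>
    have hk : 0 < a k := by
      rcases Nat.eq_zero_or_pos k with rfl | hk
      · rw [h0]; exact one_pos
      · exact hpos k hk (by omega)
    have hk1 : 0 < a (k + 1) := hpos (k + 1) (by omega) le_rfl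
    have ih := ih fun j h1 h2 => hpos j h1 (by omega)
    refine le_of_mul_le_mul_right ?_ hk
    calc a (k + 2) * a k = a k * a (k + 2) := mul_comm _ _
      _ ≤ a (k + 1) ^ 2 := hnewton k
      _ ≤ a (k + 1) * (a 1 * a k) := by rw [sq]; exact mul_le_mul_of_nonneg_left ih hk1.le
      _ = a 1 * a (k + 1) * a k := by ring

theorem Matrix.IsHermitian.sigmaElem_eq_esymm {n : ℕ} {A : Matrix (Fin n) (Fin n) ℝ}
    (hA : A.IsHermitian) (k : ℕ) :
    sigmaElem n k A = (Finset.univ.val.map fun i => -hA.neg.eigenvalues i).esymm k := by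
  rcases le_or_gt k n with hk | hk
  · have hprod :
        (-A).charpoly = (Finset.univ.val.map fun i => X + C (-hA.neg.eigenvalues i)).prod := by
      rw [hA.neg.charpoly_eq, Finset.prod_eq_multiset_prod]
      simp [sub_eq_add_neg]
    rw [sigmaElem, if_pos hk, hprod, Multiset.prod_X_add_C_coeff' _ _ (by simp)]
    simp [Nat.sub_sub_self hk]
  · rw [sigmaElem, if_neg (by omega), Multiset.esymm_eq_zero_of_card_lt (by simpa using hk)]

theorem statement2_general (n k : ℕ) (hkn : k ≤ n)
    (A : Matrix (Fin n) (Fin n) ℝ) (hA : A ∈ GammaCone n k) :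
    (k + 1 : ℝ) * sigmaElem n (k + 1) A ≤
      (((n : ℝ) - k) / n) * sigmaElem n 1 A * sigmaElem n k A := by
  obtain ⟨hsymm, hpos⟩ := hA
  have hherm : A.IsHermitian := isHermitian_iff_isSymm.mpr hsymm
  set s := Finset.univ.val.map fun i => -hherm.neg.eigenvalues i
  have hσ : ∀ j, sigmaElem n j A = (n.choose j : ℝ) * s.esymmNorm j := fun j => by
    rw [hherm.sigmaElem_eq_esymm, ← Multiset.choose_mul_esymmNorm]
    simp [s]
  have hE : s.esymmNorm (k + 1) ≤ s.esymmNorm 1 * s.esymmNorm k :=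
    apply_succ_le_apply_one_mul_of_mul_le_sq s.esymmNorm_zero s.esymmNorm_mul_esymmNorm_le_sq
      fun j h1 h2 => pos_of_mul_pos_right (hσ j ▸ hpos j h1 h2) (by positivity)
  have hchoose : (k + 1 : ℝ) * n.choose (k + 1) = (n - k) * n.choose k := by
    have := Nat.choose_succ_right_eq n k
    rw [← Nat.cast_sub hkn]
    exact_mod_cast (mul_comm _ _).trans (this.trans (mul_comm _ _))
  rw [hσ, hσ, hσ, Nat.choose_one_right]
  calc (k + 1 : ℝ) * (n.choose (k + 1) * s.esymmNorm (k + 1))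
      = (n - k) * n.choose k * s.esymmNorm (k + 1) := by rw [← mul_assoc, hchoose]
    _ ≤ (n - k) * n.choose k * (s.esymmNorm 1 * s.esymmNorm k) := by
      have hkn' : (k : ℝ) ≤ n := by exact_mod_cast hkn
      gcongr
    _ = (n - k) / n * (n * s.esymmNorm 1) * (n.choose k * s.esymmNorm k) := by
      rcases eq_or_ne n 0 with rfl | hn
      · simp [Nat.le_zero.mp hkn]
      · field_simp

/-- for `A ∈ Γ_k`, `(k+1) σ_{k+1}(A) ≤ ((n-k)/n) σ_1(A) σ_k(A)`. -/
theorem statement2 (n k : ℕ) (hk1 : 1 ≤ k) (hkn : k ≤ n)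
    (A : Matrix (Fin n) (Fin n) ℝ) (hA : A ∈ GammaCone n k) :
    (k + 1 : ℝ) * sigmaElem n (k + 1) A ≤
      (((n : ℝ) - k) / n) * sigmaElem n 1 A * sigmaElem n k A :=
  statement2_general n k hkn A hA
end

section
/- Let Ω ⊂ ℝⁿ be an open set, 1 ≤ k ≤ n, and let u : ℝⁿ → ℝ be C³ on Ω. Then for every j ∈ {1,…,n} and every x ∈ Ω, Σ_{i=1}^{n} ∂/∂x_i [ σ_k^{ij}(D²u) ](x) = 0; that is, each column of the matrix-valued map x ↦ σ_k'(D²u(x)) is a divergence-free vector field on Ω. -/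
open Matrix

/-!
Write `E_ij` for `Matrix.single i j 1`. Since the determinant is affine in each column,
`det (M + s E_ij + r E_pq) + det (M + s E_iq + r E_pj)` splits as `a s + b r`: for `j ≠ q` the
two `s r` terms differ by a swap of columns `j` and `q` and cancel. By Lagrange interpolation
`σ_k` is a linear combination of the maps `A ↦ det (l I + A)`, so it inherits this splitting, and
taking `∂²/∂s∂r` gives `D²σ_k(A)(E_ij, E_pq) = -D²σ_k(A)(E_iq, E_pj)`. By the chain rule,
`∑ i, ∂_i σ_k^{ij}(D²u) = ∑ i p q, u_ipq D²σ_k(D²u)(E_pq, E_ij)`; the third derivatives are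
symmetric in `i, p` while the coefficients change sign under `i ↔ p`, so the sum vanishes.
-/

open Polynomial
open scoped Matrix.Norms.Elementwise

namespace Matrix

section Determinant

variable {R n : Type*} [CommRing R] [DecidableEq n]

theorem transpose_add_smul_single (M : Matrix n n R) (i j : n) (s : R) :
    (M + s • single i j 1)ᵀ = Mᵀ.updateRow j (Mᵀ j + s • Pi.single i 1) := by
  ext a b
  rcases eq_or_ne a j with rfl | haj
  · simp [single_apply, Pi.single_apply, eq_comm]
  · simp [updateRow_ne haj, Ne.symm haj]

variable [Fintype n]

theorem det_updateRow_add_smul (M : Matrix n n R) (j : n) (x : n → R) (s : R) :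
    det (M.updateRow j (M j + s • x)) = det M + s * det (M.updateRow j x) := by
  rw [det_updateRow_add, det_updateRow_smul, updateRow_eq_self]

theorem det_updateRow_updateRow_add_smul (M : Matrix n n R) {j q : n} (hjq : j ≠ q)
    (x y : n → R) (s : R) :
    det ((M.updateRow j (M j + s • x)).updateRow q y)
      = det (M.updateRow q y) + s * det ((M.updateRow q y).updateRow j x) := by
  rw [updateRow_comm _ hjq, ← updateRow_ne (M := M) (b := y) hjq, det_updateRow_add_smul]

theorem det_updateRow_updateRow_comm (M : Matrix n n R) {j q : n} (hjq : j ≠ q)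
    (x y : n → R) :
    det ((M.updateRow j x).updateRow q y) = -det ((M.updateRow j y).updateRow q x) := by
  have hswap : ((M.updateRow j x).updateRow q y).submatrix (Equiv.swap j q) id
      = (M.updateRow j y).updateRow q x := by
    ext k l
    rcases eq_or_ne k j with rfl | hkj
    · simp [updateRow_apply, hjq]
    rcases eq_or_ne k q with rfl | hkq
    · simp [updateRow_apply, hjq]
    · simp [updateRow_apply, Equiv.swap_apply_of_ne_of_ne hkj hkq, hkj, hkq]
  rw [← hswap, det_permute, Equiv.Perm.sign_swap hjq]
  simp

theorem det_add_smul_single_add_smul_single (M : Matrix n n R) (i j p q : n) (s r : R) :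
    det (M + s • single i j 1 + r • single p q 1) = det (M + s • single i j 1)
      + r * det ((Mᵀ.updateRow j (Mᵀ j + s • Pi.single i 1)).updateRow q (Pi.single p 1)) := by
  rw [← det_transpose, transpose_add_smul_single, det_updateRow_add_smul,
    ← transpose_add_smul_single, det_transpose]

theorem exists_det_add_smul_single_add_det_add_smul_single_eq (M : Matrix n n R)
    (i j p q : n) : ∃ a b : R → R, ∀ s r : R,
      det (M + s • single i j 1 + r • single p q 1)
        + det (M + s • single i q 1 + r • single p j 1) = a s + b r := by
  rcases eq_or_ne j q with rfl | hjq
  · refine ⟨fun s => 2 * det (M + s • single i j 1),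
      fun r => 2 * r * det (Mᵀ.updateRow j (Pi.single p 1)), fun s r => ?_⟩
    simp only [det_add_smul_single_add_smul_single, updateRow_idem]
    ring
  · refine ⟨fun s => det (M + s • single i j 1) + det (M + s • single i q 1),
      fun r => r * (det (Mᵀ.updateRow q (Pi.single p 1)) + det (Mᵀ.updateRow j (Pi.single p 1))),
      fun s r => ?_⟩
    rw [det_add_smul_single_add_smul_single, det_add_smul_single_add_smul_single,
      det_updateRow_updateRow_add_smul _ hjq, det_updateRow_updateRow_add_smul _ hjq.symm,
      det_updateRow_updateRow_comm _ hjq (Pi.single p 1), updateRow_comm _ hjq]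
    ring

end Determinant

theorem contDiff_det_const_add {n : Type*} [Fintype n] [DecidableEq n]
    (M : Matrix n n ℝ) {m : WithTop ℕ∞} : ContDiff ℝ m fun A : Matrix n n ℝ => det (M + A) := by
  simp only [det_apply, Units.smul_def, Matrix.add_apply]
  fun_prop

theorem eq_sum_apply_smul_single {m n : Type*} [Fintype m] [Fintype n] [DecidableEq m]
    [DecidableEq n] (A : Matrix m n ℝ) : A = ∑ p, ∑ q, A p q • single p q (1 : ℝ) := by
  simp_rw [smul_single, smul_eq_mul, mul_one]
  exact matrix_eq_sum_single A

section EntrywiseCalculus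

variable {E m n : Type*} [NormedAddCommGroup E] [NormedSpace ℝ E] [Fintype m] [Fintype n]
  [DecidableEq m] [DecidableEq n]

theorem differentiableAt_of_differentiableAt_apply {G : E → Matrix m n ℝ} {x : E}
    (hG : ∀ p q, DifferentiableAt ℝ (fun y => G y p q) x) : DifferentiableAt ℝ G x := by
  rw [funext fun y => eq_sum_apply_smul_single (G y)]
  exact DifferentiableAt.fun_sum fun p _ => DifferentiableAt.fun_sum fun q _ =>
    (hG p q).smul_const _

theorem hasDerivAt_of_hasDerivAt_apply {g : ℝ → Matrix m n ℝ} {g' : Matrix m n ℝ} {t : ℝ}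
    (hg : ∀ p q, HasDerivAt (fun s => g s p q) (g' p q) t) : HasDerivAt g g' t := by
  rw [funext fun s => eq_sum_apply_smul_single (g s), eq_sum_apply_smul_single g']
  exact HasDerivAt.fun_sum fun p _ => HasDerivAt.fun_sum fun q _ => (hg p q).smul_const _

end EntrywiseCalculus

end Matrix

theorem Polynomial.exists_coeff_eq_sum_eval {K : Type*} [Field K] [CharZero K] (N m : ℕ) :
    ∃ c : Fin (N + 1) → K, ∀ P : K[X], P.degree ≤ N →
      P.coeff m = ∑ l, c l * P.eval (l : K) := by
  refine ⟨fun l => (Lagrange.basis Finset.univ (fun l : Fin (N + 1) => (l : K)) l).coeff m,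
    fun P hP => ?_⟩
  have hinj : Set.InjOn (fun l : Fin (N + 1) => (l : K)) ↑(Finset.univ : Finset (Fin (N + 1))) :=
    fun a _ b _ hab => Fin.ext (Nat.cast_injective hab)
  have hdeg : P.degree < (Finset.univ : Finset (Fin (N + 1))).card := by
    rw [Finset.card_univ, Fintype.card_fin]
    exact hP.trans_lt (by exact_mod_cast Nat.lt_succ_self N)
  conv_lhs => rw [Lagrange.eq_interpolate hinj hdeg]
  simp [Lagrange.interpolate_apply, mul_comm]

theorem sum_sum_eq_zero_of_antisymm {ι M : Type*} [Fintype ι] [AddCommGroup M]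
    [IsAddTorsionFree M] {F : ι → ι → M} (hF : ∀ i p, F p i = -F i p) :
    ∑ i, ∑ p, F i p = 0 :=
  self_eq_neg.1 <| calc
    ∑ i, ∑ p, F i p = ∑ p, ∑ i, F i p := Finset.sum_comm
    _ = ∑ p, ∑ i, -F p i := Finset.sum_congr rfl fun p _ => Finset.sum_congr rfl fun i _ => hF p i
    _ = -∑ i, ∑ p, F i p := by simp only [Finset.sum_neg_distrib]

section GeneralCalculus

variable {E F : Type*} [NormedAddCommGroup E] [NormedSpace ℝ E]
  [NormedAddCommGroup F] [NormedSpace ℝ F]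

theorem fderiv_fderiv_add_eq_zero_of_separated {f : E → F} (hf : ContDiff ℝ 2 f)
    {A U V U' V' : E} {a b : ℝ → F}
    (h : ∀ s r : ℝ, f (A + s • U + r • V) + f (A + s • U' + r • V') = a s + b r) :
    fderiv ℝ (fderiv ℝ f) A U V + fderiv ℝ (fderiv ℝ f) A U' V' = 0 := by
  have hdf : Differentiable ℝ f := hf.differentiable (by norm_num)
  have hd2f : Differentiable ℝ (fderiv ℝ f) :=
    (hf.fderiv_right (m := 1) le_rfl).differentiable one_ne_zero
  have hline (B W : E) : HasDerivAt (fun t : ℝ => f (B + t • W)) (fderiv ℝ f B W) 0 :=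
    (hdf B).hasFDerivAt.hasLineDerivAt W
  have hline' (W Z : E) : HasDerivAt (fun s : ℝ => fderiv ℝ f (A + s • W) Z)
      (fderiv ℝ (fderiv ℝ f) A W Z) 0 := by
    simpa using ((hd2f A).hasFDerivAt.hasLineDerivAt W).clm_apply (hasDerivAt_const 0 Z)
  have hfirst (s : ℝ) : fderiv ℝ f (A + s • U) V + fderiv ℝ f (A + s • U') V' = deriv b 0 := by
    rw [← deriv_const_add (a s), ← ((hline _ V).add (hline _ V')).deriv]
    exact congrArg (deriv · 0) (funext (h s))
  exact ((hline' U V).add (hline' U' V')).unique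
    ((hasDerivAt_const 0 (deriv b 0)).congr_of_eventuallyEq (.of_forall hfirst))

end GeneralCalculus

section PartialDerivatives

variable {n : ℕ} {w : (Fin n → ℝ) → ℝ} {x : Fin n → ℝ}

theorem contDiffAt_pd {m N : WithTop ℕ∞} (hw : ContDiffAt ℝ N w x) (hmN : m + 1 ≤ N)
    (i : Fin n) : ContDiffAt ℝ m (pd n w i) x :=
  (hw.fderiv_right hmN).clm_apply contDiffAt_const

theorem pd_pd_comm (hw : ContDiffAt ℝ 2 w x) (i p : Fin n) :
    pd n (pd n w p) i x = pd n (pd n w i) p x := by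
  have hd : DifferentiableAt ℝ (fderiv ℝ w) x :=
    (hw.fderiv_right (m := 1) le_rfl).differentiableAt one_ne_zero
  have hsnd (a b : Fin n) :
      pd n (pd n w a) b x = fderiv ℝ (fderiv ℝ w) x (Pi.single b 1) (Pi.single a 1) := by
    rw [pd, show pd n w a = fun y => fderiv ℝ w y (Pi.single a 1) from rfl,
      fderiv_clm_apply hd (differentiableAt_const _)]
    simp
  rw [hsnd, hsnd, (hw.isSymmSndFDerivAt (by simp)).eq]

end PartialDerivatives

section SigmaElem

theorem exists_sigmaElem_eq_sum_det (n k : ℕ) : ∃ c : Fin (n + 1) → ℝ,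
    ∀ A, sigmaElem n k A = ∑ l, c l * det (scalar (Fin n) (l : ℝ) + A) := by
  by_cases hk : k ≤ n
  · obtain ⟨c, hc⟩ := exists_coeff_eq_sum_eval (K := ℝ) n (n - k)
    refine ⟨c, fun A => ?_⟩
    rw [sigmaElem, if_pos hk, hc _ (by rw [charpoly_degree_eq_dim, Fintype.card_fin])]
    simp [eval_charpoly]
  · exact ⟨0, by simp [sigmaElem, hk]⟩

theorem contDiff_sigmaElem (n k : ℕ) {m : WithTop ℕ∞} : ContDiff ℝ m (sigmaElem n k) := by
  obtain ⟨c, hc⟩ := exists_sigmaElem_eq_sum_det n k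
  rw [funext hc]
  exact ContDiff.sum fun l _ => contDiff_const.mul (contDiff_det_const_add _)

variable {n : ℕ} (k : ℕ)

theorem exists_sigmaElem_add_sigmaElem_eq (A : Matrix (Fin n) (Fin n) ℝ) (i j p q : Fin n) :
    ∃ a b : ℝ → ℝ, ∀ s r : ℝ,
      sigmaElem n k (A + s • single i j 1 + r • single p q 1)
        + sigmaElem n k (A + s • single i q 1 + r • single p j 1) = a s + b r := by
  obtain ⟨c, hc⟩ := exists_sigmaElem_eq_sum_det n k
  choose a b hab using fun l : Fin (n + 1) =>
    exists_det_add_smul_single_add_det_add_smul_single_eq (scalar (Fin n) (l : ℝ) + A) i j p q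
  refine ⟨fun s => ∑ l, c l * a l s, fun r => ∑ l, c l * b l r, fun s r => ?_⟩
  simp only [hc, ← Finset.sum_add_distrib, ← mul_add, ← hab, add_assoc]

theorem fderiv_fderiv_sigmaElem_comm (A V W : Matrix (Fin n) (Fin n) ℝ) :
    fderiv ℝ (fderiv ℝ (sigmaElem n k)) A V W = fderiv ℝ (fderiv ℝ (sigmaElem n k)) A W V :=
  ((contDiff_sigmaElem n k (m := 2)).contDiffAt.isSymmSndFDerivAt (by simp)).eq V W

theorem fderiv_fderiv_sigmaElem_add (A : Matrix (Fin n) (Fin n) ℝ) (i j p q : Fin n) :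
    fderiv ℝ (fderiv ℝ (sigmaElem n k)) A (single i j 1) (single p q 1)
      + fderiv ℝ (fderiv ℝ (sigmaElem n k)) A (single i q 1) (single p j 1) = 0 := by
  obtain ⟨a, b, h⟩ := exists_sigmaElem_add_sigmaElem_eq k A i j p q
  exact fderiv_fderiv_add_eq_zero_of_separated (contDiff_sigmaElem n k) h

theorem fderiv_fderiv_sigmaElem_single_eq_neg (A : Matrix (Fin n) (Fin n) ℝ) (i j p q : Fin n) :
    fderiv ℝ (fderiv ℝ (sigmaElem n k)) A (single i q 1) (single p j 1)
      = -fderiv ℝ (fderiv ℝ (sigmaElem n k)) A (single p q 1) (single i j 1) := by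
  linear_combination fderiv_fderiv_sigmaElem_add k A i j p q
    - fderiv_fderiv_sigmaElem_comm k A (single i j 1) (single p q 1)

theorem sigmaD_eq_fderiv (A : Matrix (Fin n) (Fin n) ℝ) (i j : Fin n) :
    sigmaD n k A i j = fderiv ℝ (sigmaElem n k) A (single i j 1) :=
  ((contDiff_sigmaElem n k (m := 1)).differentiable one_ne_zero A).lineDeriv_eq_fderiv

theorem hasFDerivAt_fderiv_sigmaElem_apply (A V : Matrix (Fin n) (Fin n) ℝ) :
    HasFDerivAt (fun B => fderiv ℝ (sigmaElem n k) B V)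
      ((ContinuousLinearMap.apply ℝ ℝ V).comp (fderiv ℝ (fderiv ℝ (sigmaElem n k)) A)) A := by
  have hd2 := ((contDiff_sigmaElem n k (m := 2)).fderiv_right (m := 1) le_rfl).differentiable
    one_ne_zero A
  exact (ContinuousLinearMap.apply ℝ ℝ V).hasFDerivAt.comp A hd2.hasFDerivAt

theorem pd_sigmaD_comp {G : (Fin n → ℝ) → Matrix (Fin n) (Fin n) ℝ} {x : Fin n → ℝ}
    (hG : ∀ p q, DifferentiableAt ℝ (fun y => G y p q) x) (i j l : Fin n) :
    pd n (fun y => sigmaD n k (G y) i j) l x = ∑ p, ∑ q, pd n (fun y => G y p q) l x *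
      fderiv ℝ (fderiv ℝ (sigmaElem n k)) (G x) (single p q 1) (single i j 1) := by
  have hσ := hasFDerivAt_fderiv_sigmaElem_apply k (G x) (single i j 1)
  have hdiff : DifferentiableAt ℝ (fun y => fderiv ℝ (sigmaElem n k) (G y) (single i j 1)) x :=
    hσ.differentiableAt.comp x (differentiableAt_of_differentiableAt_apply hG)
  have hline : HasDerivAt (fun t : ℝ => G (x + t • Pi.single l 1))
      (of fun p q => pd n (fun y => G y p q) l x) 0 :=
    hasDerivAt_of_hasDerivAt_apply fun p q => (hG p q).hasFDerivAt.hasLineDerivAt _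
  have hcomp := hσ.comp_hasDerivAt_of_eq 0 hline (by simp)
  simp_rw [sigmaD_eq_fderiv]
  rw [pd, ← hdiff.lineDeriv_eq_fderiv]
  refine hcomp.deriv.trans ?_
  -- `ContinuousLinearMap.apply` above carries the product topology of `Matrix`, which is only
  -- defeq (not reducibly) to the norm topology, so the rewriting lemmas for `comp` do not fire.
  change fderiv ℝ (fderiv ℝ (sigmaElem n k)) (G x) (of fun p q => _) (single i j 1) = _
  rw [eq_sum_apply_smul_single (of _)]
  simp only [map_sum, map_smul, of_apply, _root_.sum_apply, _root_.smul_apply, smul_eq_mul]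

end SigmaElem

theorem statement4_general (n k : ℕ)
    (Ω : Set (Fin n → ℝ)) (hΩopen : IsOpen Ω)
    (u : (Fin n → ℝ) → ℝ) (huC3 : ContDiffOn ℝ 3 u Ω) :
    ∀ j : Fin n, ∀ x ∈ Ω,
      ∑ i, pd n (fun y => sigmaD n k (hess n u y) i j) i x = 0 := by
  intro j x hx
  have hu : ContDiffAt ℝ 3 u x := huC3.contDiffAt (hΩopen.mem_nhds hx)
  have hDu (q : Fin n) : ContDiffAt ℝ 2 (pd n u q) x := contDiffAt_pd hu (by norm_num) q
  have hD2u (p q : Fin n) : DifferentiableAt ℝ (fun y => hess n u y p q) x :=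
    (contDiffAt_pd (hDu q) (by norm_num) p).differentiableAt one_ne_zero
  have hD3u (i p q : Fin n) :
      pd n (fun y => hess n u y i q) p x = pd n (fun y => hess n u y p q) i x :=
    pd_pd_comm (hDu q) p i
  rw [Finset.sum_congr rfl fun i _ => pd_sigmaD_comp k hD2u i j i]
  refine sum_sum_eq_zero_of_antisymm fun i p => ?_
  rw [← Finset.sum_neg_distrib]
  refine Finset.sum_congr rfl fun q _ => ?_
  rw [hD3u, fderiv_fderiv_sigmaElem_single_eq_neg, mul_neg]

/-- each column of `x ↦ σ_k'(D²u(x))` is divergence free. -/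
theorem statement4 (n k : ℕ) (hk1 : 1 ≤ k) (hkn : k ≤ n)
    (Ω : Set (Fin n → ℝ)) (hΩopen : IsOpen Ω)
    (u : (Fin n → ℝ) → ℝ) (huC3 : ContDiffOn ℝ 3 u Ω) :
    ∀ j : Fin n, ∀ x ∈ Ω,
      ∑ i, pd n (fun y => sigmaD n k (hess n u y) i j) i x = 0 :=
  statement4_general n k Ω hΩopen u huC3
end

section
/- For every real symmetric n×n matrix A and every 1 ≤ k ≤ n, the matrices σ_k'(A) and A commute and their product is symmetric; entrywise, Σ_{i=1}^{n} σ_k^{ij}(A)·a_{il} = Σ_{i=1}^{n} σ_k^{il}(A)·a_{ij} for all j, l. -/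
open Matrix

/-! `σ_k(A)` is the coefficient of `t^(n-k)` in `det (t • 1 + A)`, and a determinant is affine
in each entry with the cofactor as slope, so `σ_k'(A)` is the transpose of the `t^(n-k)`
coefficient of `adj (t • 1 + A)`. That adjugate commutes with `t • 1 + A`, hence each of its
coefficients commutes with `A`, and for symmetric `A` it is symmetric. -/

open Polynomial

namespace Matrix

variable {ι R : Type*} [Fintype ι] [DecidableEq ι] [CommRing R]

theorem det_add_smul_single (M : Matrix ι ι R) (i j : ι) (c : R) :
    (M + c • single i j 1).det = M.det + c * M.adjugate j i := by
  have hrow : M + c • single i j 1 = M.updateRow i (M i + c • Pi.single j 1) := by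
    ext a b
    by_cases ha : a = i
    · subst ha; simp [single_apply, Pi.single_apply, eq_comm]
    · simp [ha, Ne.symm ha]
  rw [hrow, det_updateRow_add, det_updateRow_smul, updateRow_eq_self, adjugate_apply]

theorem charmatrix_sub (M N : Matrix ι ι R) :
    charmatrix (M - N) = charmatrix M + N.map C := by
  ext a b : 1
  by_cases h : a = b
  · subst h; simp [charmatrix_apply_eq]; ring
  · simp [charmatrix_apply_ne _ _ _ h]; ring

theorem commute_coeff_adjugate_charmatrix (M : Matrix ι ι R) (m : ℕ) :
    Commute ((matPolyEquiv M.charmatrix.adjugate).coeff m) M := by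
  set P := matPolyEquiv M.charmatrix.adjugate
  have hX : Commute P (X - C M) := by
    rw [← matPolyEquiv_charmatrix]
    have h : Commute M.charmatrix.adjugate M.charmatrix :=
      (adjugate_mul _).trans (mul_adjugate _).symm
    exact h.map matPolyEquiv
  have hC : Commute P (C M) := by
    have := hX.sub_right (commute_X P).symm
    rwa [sub_sub_cancel_left, Commute.neg_right_iff] at this
  have := congrArg (coeff · m) hC.eq
  simp only [coeff_mul_C, coeff_C_mul] at this
  exact this

theorem transpose_coeff_adjugate_charmatrix (M : Matrix ι ι R) (m : ℕ) :
    ((matPolyEquiv M.charmatrix.adjugate).coeff m)ᵀ =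
      (matPolyEquiv Mᵀ.charmatrix.adjugate).coeff m := by
  ext a b
  simp [matPolyEquiv_coeff_apply, charmatrix_transpose, ← adjugate_transpose]

end Matrix

section ElementarySymmetric

variable {n k : ℕ}

theorem sigmaElem_add_smul_single (hkn : k ≤ n) (A : Matrix (Fin n) (Fin n) ℝ) (i j : Fin n)
    (t : ℝ) :
    sigmaElem n k (A + t • single i j 1) =
      sigmaElem n k A + t * ((charmatrix (-A)).adjugate j i).coeff (n - k) := by
  have hchar : charmatrix (-(A + t • single i j 1)) = charmatrix (-A) + C t • single i j 1 := by
    rw [neg_add, ← sub_eq_add_neg, charmatrix_sub]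
    congr 1
    ext a b : 1
    simp [single_apply, apply_ite C]
  simp only [sigmaElem, if_pos hkn, charpoly, hchar, det_add_smul_single, coeff_add, coeff_C_mul]

theorem sigmaD_eq_coeff_adjugate (hkn : k ≤ n) (A : Matrix (Fin n) (Fin n) ℝ) (i j : Fin n) :
    sigmaD n k A i j = ((charmatrix (-A)).adjugate j i).coeff (n - k) := by
  simp only [sigmaD, sigmaElem_add_smul_single hkn]
  exact ((hasDerivAt_id 0).mul_const _).const_add _ |>.deriv.trans (one_mul _)

theorem sigmaGrad_eq_transpose_coeff (hkn : k ≤ n) (A : Matrix (Fin n) (Fin n) ℝ) :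
    sigmaGrad n k A = ((matPolyEquiv (charmatrix (-A)).adjugate).coeff (n - k))ᵀ := by
  ext i j
  simp [sigmaGrad, sigmaD_eq_coeff_adjugate hkn, matPolyEquiv_coeff_apply]

end ElementarySymmetric

theorem statement5_general (n k : ℕ) (hkn : k ≤ n)
    (A : Matrix (Fin n) (Fin n) ℝ) (hA : A.IsSymm) :
    sigmaGrad n k A * A = A * sigmaGrad n k A ∧
    (sigmaGrad n k A * A).IsSymm ∧
    ∀ j l, ∑ i, sigmaD n k A i j * A i l = ∑ i, sigmaD n k A i l * A i j := by
  set G := (matPolyEquiv (charmatrix (-A)).adjugate).coeff (n - k)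
  have hGA : Commute G A :=
    Commute.neg_right_iff.mp (commute_coeff_adjugate_charmatrix (-A) _)
  have hGsymm : Gᵀ = G := by
    rw [transpose_coeff_adjugate_charmatrix, transpose_neg, hA]
  have hgrad : sigmaGrad n k A = G := (sigmaGrad_eq_transpose_coeff hkn A).trans hGsymm
  have hsymm : (G * A).IsSymm := by
    rw [IsSymm, transpose_mul, hA, hGsymm]
    exact hGA.eq.symm
  have hsum : ∀ j l, ∑ i, sigmaD n k A i j * A i l = (G * A) j l := by
    intro j l
    rw [← hGsymm, ← hgrad]
    rfl
  refine ⟨hgrad ▸ hGA.eq, hgrad ▸ hsymm, fun j l => ?_⟩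
  rw [hsum, hsum]
  exact hsymm.apply l j

/-- for symmetric `A`, `σ_k'(A)` commutes with `A` and `σ_k'(A) * A` is
symmetric; entrywise `∑_i σ_k^{ij}(A) a_{il} = ∑_i σ_k^{il}(A) a_{ij}`. -/
theorem statement5 (n k : ℕ) (hk1 : 1 ≤ k) (hkn : k ≤ n)
    (A : Matrix (Fin n) (Fin n) ℝ) (hA : A.IsSymm) :
    sigmaGrad n k A * A = A * sigmaGrad n k A ∧
    (sigmaGrad n k A * A).IsSymm ∧
    ∀ j l, ∑ i, sigmaD n k A i j * A i l = ∑ i, sigmaD n k A i l * A i j :=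
  statement5_general n k hkn A hA
end
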